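/- arXiv:1201.0692 — 2 statements merged into one kernel-verified Lean document; each statement's English description precedes it below -/
import Mathlib

section
/- Let X and E be topological spaces, m a natural number, and l : Fin m → E → ℝ a family of continuous real-valued functions on E. Let I be a function assigning to each x ∈ X a nonempty finite subset I(x) of Fin m such that for every finite subset J of Fin m the set {x ∈ X : J ⊆ I(x)} is open in X. Then the function F : X × E → ℝ defined by F(x, v) = max_{i ∈ I(x)} l_i(v) is lower semicontinuous on the product space X × E. -/
/-!
If `y < max_{i ∈ I x} l i v`, some index `i ∈ I x` has `y < l i v`. Near `(x, v)` the index `i`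
stays in the state (openness of `{x | {i} ⊆ I x}`) and `l i` stays above `y` (continuity), so the
maximum stays above `y` as well.
-/

theorem lowerSemicontinuous_finset_sup'_of_isOpen_setOf_mem
    {Z ι α : Type*} [TopologicalSpace Z] [LinearOrder α]
    (S : Z → Finset ι) (hS : ∀ z, (S z).Nonempty) (f : ι → Z → α)
    (hf : ∀ i, LowerSemicontinuous (f i)) (hopen : ∀ i, IsOpen {z | i ∈ S z}) :
    LowerSemicontinuous fun z => (S z).sup' (hS z) fun i => f i z := by
  intro z y hy
  obtain ⟨i, hi, hiy⟩ := (Finset.lt_sup'_iff _).mp hy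
  filter_upwards [(hopen i).mem_nhds hi, hf i z y hiy] with z' hiz' hyz'
  exact hyz'.trans_le (Finset.le_sup' (fun i => f i z') hiz')

/-- Joint version of Mumford's lemma: with finitely many continuous functions
`l i : E → ℝ` and a state map `I : X → Finset (Fin m)` such that each locus
`{x | J ⊆ I x}` is open, the function `(x, v) ↦ max_{i ∈ I x} l i v` is lower
semicontinuous on the product `X × E`. -/
theorem maxOverState_lowerSemicontinuous_prod
    {X E : Type*} [TopologicalSpace X] [TopologicalSpace E] (m : ℕ)
    (l : Fin m → E → ℝ) (hl : ∀ i, Continuous (l i))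
    (I : X → Finset (Fin m)) (hne : ∀ x, (I x).Nonempty)
    (hopen : ∀ J : Finset (Fin m), IsOpen {x : X | J ⊆ I x}) :
    LowerSemicontinuous (fun p : X × E => (I p.1).sup' (hne p.1) (fun i => l i p.2)) := by
  refine lowerSemicontinuous_finset_sup'_of_isOpen_setOf_mem (fun p : X × E => I p.1)
    (fun p => hne p.1) (fun i p => l i p.2)
    (fun i => ((hl i).comp continuous_snd).lowerSemicontinuous) fun i => ?_
  simpa only [Finset.singleton_subset_iff, Set.preimage_ofPred_eq] using
    (hopen {i}).preimage continuous_fst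
end

section
/- Let k be a field and V a finite-dimensional k-vector space. Let D, D' : ℤ → Submodule k V be two internal direct sum decompositions of V (i.e. V is the internal direct sum of the D(w), w ∈ ℤ, and also of the D'(w)), each with D(w) = 0 and D'(w) = 0 outside a finite set of integers. For m ∈ ℤ set F(m) = ⨆_{w ≥ m} D(w). Assume that for every m ∈ ℤ one has ⨆_{w ≥ m} D(w) = ⨆_{w ≥ m} D'(w) as submodules of V. Then there exists a k-linear automorphism g of V such that: (1) g maps D(w) onto D'(w) for every w ∈ ℤ; (2) g maps F(m) onto F(m) for every m ∈ ℤ; and (3) for every m ∈ ℤ and every v ∈ F(m), g(v) − v ∈ F(m+1). -/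
/-!
Write `F m = ⨆ w ≥ m, D w`. Since `F` is also the filtration of `D'`, both `D w` and `D' w`
are complements of `F (w + 1)` in `F w`, so both map isomorphically onto `F w / F (w + 1)`.
This yields `φ w : D w ≃ D' w` with `φ w x - x ∈ F (w + 1)`, and `g` is obtained by gluing the
`φ w` along the two decompositions of `V`.
-/

namespace Submodule

variable {R M : Type*} [Ring R] [AddCommGroup M] [Module R M]

theorem injective_mkQ_comp_subtype {p q : Submodule R M} (h : Disjoint p q) :
    Function.Injective (q.mkQ ∘ₗ p.subtype) := by
  rw [← LinearMap.ker_eq_bot, LinearMap.ker_comp, ker_mkQ, ← disjoint_iff_comap_eq_bot]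
  exact h

theorem range_mkQ_comp_subtype (p q : Submodule R M) :
    LinearMap.range (q.mkQ ∘ₗ p.subtype) = (p ⊔ q).map q.mkQ := by
  rw [LinearMap.range_comp, range_subtype, map_sup, mkQ_map_self, sup_bot_eq]

theorem exists_linearEquiv_sub_mem_of_sup_eq {p p' q : Submodule R M}
    (hp : Disjoint p q) (hp' : Disjoint p' q) (h : p ⊔ q = p' ⊔ q) :
    ∃ φ : p ≃ₗ[R] p', ∀ x : p, (φ x : M) - x ∈ q := by
  -- both `p` and `p'` map isomorphically onto `(p ⊔ q) / q`
  have hrange : LinearMap.range (q.mkQ ∘ₗ p.subtype) =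
      LinearMap.range (q.mkQ ∘ₗ p'.subtype) := by
    rw [range_mkQ_comp_subtype, range_mkQ_comp_subtype, h]
  have hinj := injective_mkQ_comp_subtype hp
  have hinj' := injective_mkQ_comp_subtype hp'
  refine ⟨(LinearEquiv.ofInjective _ hinj).trans ((LinearEquiv.ofEq _ _ hrange).trans
    (LinearEquiv.ofInjective _ hinj').symm), fun x => (Quotient.eq q).mp ?_⟩
  exact LinearEquiv.ofInjective_symm_apply (h := hinj') _ _

theorem map_eq_of_linearEquiv_apply {N : Type*} [AddCommGroup N] [Module R N]
    {p : Submodule R M} {p' : Submodule R N} (f : M →ₗ[R] N) (φ : p ≃ₗ[R] p')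
    (hf : ∀ x : p, f x = φ x) : p.map f = p' := by
  ext y
  constructor
  · rintro ⟨x, hx, rfl⟩
    exact hf ⟨x, hx⟩ ▸ (φ ⟨x, hx⟩).2
  · intro hy
    refine ⟨φ.symm ⟨y, hy⟩, (φ.symm ⟨y, hy⟩).2, ?_⟩
    simp [hf]

end Submodule

namespace DirectSum.IsInternal

variable {ι R M : Type*} [DecidableEq ι] [Semiring R] [AddCommMonoid M] [Module R M]

theorem exists_linearEquiv_apply {D D' : ι → Submodule R M} (hD : IsInternal D)
    (hD' : IsInternal D') (φ : ∀ i, D i ≃ₗ[R] D' i) :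
    ∃ g : M ≃ₗ[R] M, ∀ i (x : D i), g x = φ i x := by
  let e := LinearEquiv.ofBijective (coeLinearMap D) hD
  let e' := LinearEquiv.ofBijective (coeLinearMap D') hD'
  refine ⟨e.symm.trans ((DFinsupp.mapRange.linearEquiv φ).trans e'), fun i x => ?_⟩
  have hx : e.symm x = of (fun i => D i) i x := by
    rw [LinearEquiv.symm_apply_eq]
    exact (coeLinearMap_of D i x).symm
  have hφx : DFinsupp.mapRange.linearEquiv φ (of (fun i => D i) i x) =
      of (fun i => D' i) i (φ i x) :=
    DFinsupp.mapRange_single (hf := fun i => (φ i).map_zero)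
  simp only [LinearEquiv.trans_apply, hx, hφx]
  exact coeLinearMap_of D' i (φ i x)

end DirectSum.IsInternal

section Filtration

variable {R M N : Type*} [Semiring R] [AddCommMonoid M] [Module R M] [AddCommMonoid N]
  [Module R N]

def gradingFiltration (D : ℤ → Submodule R M) (m : ℤ) : Submodule R M :=
  ⨆ w ≥ m, D w

theorem le_gradingFiltration (D : ℤ → Submodule R M) {m w : ℤ} (h : m ≤ w) :
    D w ≤ gradingFiltration D m :=
  le_iSup₂_of_le w h le_rfl

theorem gradingFiltration_antitone (D : ℤ → Submodule R M) : Antitone (gradingFiltration D) :=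
  fun _ _ h => iSup₂_le fun _ hw => le_gradingFiltration D (h.trans hw)

theorem gradingFiltration_eq_sup (D : ℤ → Submodule R M) (m : ℤ) :
    gradingFiltration D m = D m ⊔ gradingFiltration D (m + 1) := by
  refine le_antisymm (iSup₂_le fun w hw => ?_)
    (sup_le (le_gradingFiltration D le_rfl) (gradingFiltration_antitone D (by omega)))
  rcases hw.eq_or_lt with rfl | hlt
  · exact le_sup_left
  · exact le_sup_of_le_right (le_gradingFiltration D hlt)

theorem map_gradingFiltration (D : ℤ → Submodule R M) (f : M →ₗ[R] N) (m : ℤ) :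
    (gradingFiltration D m).map f = gradingFiltration (fun w => (D w).map f) m := by
  simp only [gradingFiltration, Submodule.map_iSup]

end Filtration

theorem DirectSum.IsInternal.disjoint_gradingFiltration_succ {R M : Type*} [Ring R]
    [AddCommGroup M] [Module R M] {D : ℤ → Submodule R M} (hD : IsInternal D) (m : ℤ) :
    Disjoint (D m) (gradingFiltration D (m + 1)) :=
  (hD.submodule_iSupIndep m).mono_right (iSup₂_le fun w hw =>
    le_iSup₂_of_le (f := fun w (_ : w ≠ m) => D w) w (by omega) le_rfl)

theorem gradings_with_same_filtration_conjugate_general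
    {k V : Type*} [Field k] [AddCommGroup V] [Module k V]
    (D D' : ℤ → Submodule k V)
    (hD : DirectSum.IsInternal D) (hD' : DirectSum.IsInternal D')
    (hfil : ∀ m : ℤ, (⨆ w ≥ m, D w) = ⨆ w ≥ m, D' w) :
    ∃ g : V ≃ₗ[k] V,
      (∀ w : ℤ, (D w).map (g : V →ₗ[k] V) = D' w) ∧
      (∀ m : ℤ, (⨆ w ≥ m, D w).map (g : V →ₗ[k] V) = ⨆ w ≥ m, D w) ∧
      (∀ m : ℤ, ∀ v ∈ (⨆ w ≥ m, D w), g v - v ∈ (⨆ w ≥ m + 1, D w)) := by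
  have hF : ∀ m, gradingFiltration D m = gradingFiltration D' m := hfil
  have hpiece : ∀ w, ∃ φ : D w ≃ₗ[k] D' w,
      ∀ x : D w, (φ x : V) - x ∈ gradingFiltration D (w + 1) := by
    intro w
    refine Submodule.exists_linearEquiv_sub_mem_of_sup_eq (hD.disjoint_gradingFiltration_succ w)
      (hF (w + 1) ▸ hD'.disjoint_gradingFiltration_succ w) ?_
    rw [← gradingFiltration_eq_sup, hF (w + 1), ← gradingFiltration_eq_sup, hF]
  choose φ hφ using hpiece
  obtain ⟨g, hg⟩ := hD.exists_linearEquiv_apply hD' φ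
  have hmap : ∀ w, (D w).map (g : V →ₗ[k] V) = D' w := fun w =>
    Submodule.map_eq_of_linearEquiv_apply g (φ w) (hg w)
  refine ⟨g, hmap, fun m => ?_, fun m v hv => ?_⟩
  · change (gradingFiltration D m).map _ = gradingFiltration D m
    rw [map_gradingFiltration, funext hmap, hF]
  · have hle : gradingFiltration D m ≤
        (gradingFiltration D (m + 1)).comap ((g : V →ₗ[k] V) - LinearMap.id) :=
      iSup₂_le fun w hw x hx =>
        gradingFiltration_antitone D (by omega) (hg w ⟨x, hx⟩ ▸ hφ w ⟨x, hx⟩)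
    exact hle hv

/-- Two `ℤ`-gradings of a finite-dimensional vector space inducing the same
descending filtration `F m = ⨆ w ≥ m, D w` are conjugate by an automorphism
preserving the filtration and inducing the identity on the associated graded. -/
theorem gradings_with_same_filtration_conjugate
    {k V : Type*} [Field k] [AddCommGroup V] [Module k V] [FiniteDimensional k V]
    (D D' : ℤ → Submodule k V)
    (hD : DirectSum.IsInternal D) (hD' : DirectSum.IsInternal D')
    (hDfin : {w : ℤ | D w ≠ ⊥}.Finite) (hD'fin : {w : ℤ | D' w ≠ ⊥}.Finite)
    (hfil : ∀ m : ℤ, (⨆ w ≥ m, D w) = ⨆ w ≥ m, D' w) :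
    ∃ g : V ≃ₗ[k] V,
      (∀ w : ℤ, (D w).map (g : V →ₗ[k] V) = D' w) ∧
      (∀ m : ℤ, (⨆ w ≥ m, D w).map (g : V →ₗ[k] V) = ⨆ w ≥ m, D w) ∧
      (∀ m : ℤ, ∀ v ∈ (⨆ w ≥ m, D w), g v - v ∈ (⨆ w ≥ m + 1, D w)) :=
  gradings_with_same_filtration_conjugate_general D D' hD hD' hfil
end
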